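/- arXiv:1303.3162 — 3 statements merged into one kernel-verified Lean document; each statement's English description precedes it below -/
import Mathlib

section
/- Let Ω ⊆ ℂ be an open set, let σ : ℂ → ℝ be twice continuously differentiable on Ω with σ(z) > 0 for all z ∈ Ω, and let u : ℂ → ℂ be twice continuously differentiable on Ω satisfying the conductivity equation ∂ₓ(σ ∂ₓ u) + ∂_y(σ ∂_y u) = 0 on Ω. Then the function ψ : ℂ → ℂ defined by ψ(z) = √(σ(z)) · u(z) satisfies the Schrödinger equation Δψ(z) = q(z) ψ(z) for all z ∈ Ω, where q(z) = Δ(√σ)(z) / √(σ(z)). -/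
open Complex MeasureTheory

/-- Directional derivative in the direction `1` (the x-direction). -/
noncomputable def dx (f : ℂ → ℂ) (z : ℂ) : ℂ := fderiv ℝ f z 1

/-- Directional derivative in the direction `i` (the y-direction). -/
noncomputable def dy (f : ℂ → ℂ) (z : ℂ) : ℂ := fderiv ℝ f z Complex.I

/-- Laplacian `Δf = ∂ₓ²f + ∂_y²f`. -/
noncomputable def lap (f : ℂ → ℂ) (z : ℂ) : ℂ := dx (dx f) z + dy (dy f) z

/-- Wirtinger derivative `∂_z f = ½(∂ₓ f − i ∂_y f)`. -/
noncomputable def dz (f : ℂ → ℂ) (z : ℂ) : ℂ := (dx f z - Complex.I * dy f z) / 2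

/-- Wirtinger derivative `∂̄_z f = ½(∂ₓ f + i ∂_y f)`. -/
noncomputable def dbar (f : ℂ → ℂ) (z : ℂ) : ℂ := (dx f z + Complex.I * dy f z) / 2

/-!
Write `s = √σ`, so that `σ = s²`. In every direction `v` the Leibniz rule gives
`s ∂ᵥ²(s u) - (∂ᵥ² s) s u = 2 s (∂ᵥ s)(∂ᵥ u) + s² ∂ᵥ² u = ∂ᵥ(s² ∂ᵥ u)`.
Summing over `v = 1, i` yields `s Δ(s u) - (Δs) s u = div(σ ∇u)`, which vanishes by the
conductivity equation; dividing by `s ≠ 0` gives `Δψ = q ψ`.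
-/

section DirectionalLeibniz

variable {𝕜 E 𝔸 : Type*} [NontriviallyNormedField 𝕜] [NormedAddCommGroup E] [NormedSpace 𝕜 E]
  [NormedCommRing 𝔸] [NormedAlgebra 𝕜 𝔸] {Ω : Set E} {s u : E → 𝔸} {z : E}

theorem fderiv_fun_mul_apply (hs : DifferentiableAt 𝕜 s z) (hu : DifferentiableAt 𝕜 u z)
    (v : E) :
    fderiv 𝕜 (fun w => s w * u w) z v = fderiv 𝕜 s z v * u z + s z * fderiv 𝕜 u z v := by
  rw [fderiv_fun_mul hs hu]
  simp only [add_apply, smul_apply, smul_eq_mul]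
  ring

theorem ContDiffOn.differentiableAt_fderiv_apply (hs : ContDiffOn 𝕜 2 s Ω) (hΩ : IsOpen Ω)
    (hz : z ∈ Ω) (v : E) : DifferentiableAt 𝕜 (fun w => fderiv 𝕜 s w v) z :=
  (((hs.fderiv_of_isOpen hΩ (by norm_num : (1 : WithTop ℕ∞) + 1 ≤ 2)).clm_apply
    contDiffOn_const).differentiableOn one_ne_zero).differentiableAt (hΩ.mem_nhds hz)

theorem fderiv_fderiv_fun_mul_apply (hΩ : IsOpen Ω) (hs : ContDiffOn 𝕜 2 s Ω)
    (hu : ContDiffOn 𝕜 2 u Ω) (hz : z ∈ Ω) (v : E) :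
    fderiv 𝕜 (fun w => fderiv 𝕜 (fun w' => s w' * u w') w v) z v
      = fderiv 𝕜 (fun w => fderiv 𝕜 s w v) z v * u z
        + 2 * (fderiv 𝕜 s z v * fderiv 𝕜 u z v)
        + s z * fderiv 𝕜 (fun w => fderiv 𝕜 u w v) z v := by
  have ds := (hs.contDiffAt (hΩ.mem_nhds hz)).differentiableAt two_ne_zero
  have du := (hu.contDiffAt (hΩ.mem_nhds hz)).differentiableAt two_ne_zero
  have dds := hs.differentiableAt_fderiv_apply hΩ hz v
  have ddu := hu.differentiableAt_fderiv_apply hΩ hz v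
  have first_order : (fun w => fderiv 𝕜 (fun w' => s w' * u w') w v)
      =ᶠ[nhds z] fun w => fderiv 𝕜 s w v * u w + s w * fderiv 𝕜 u w v := by
    filter_upwards [hΩ.mem_nhds hz] with w hw
    exact fderiv_fun_mul_apply ((hs.contDiffAt (hΩ.mem_nhds hw)).differentiableAt two_ne_zero)
      ((hu.contDiffAt (hΩ.mem_nhds hw)).differentiableAt two_ne_zero) v
  rw [first_order.fderiv_eq, fderiv_fun_add (dds.fun_mul du) (ds.fun_mul ddu),
    add_apply, fderiv_fun_mul_apply dds du, fderiv_fun_mul_apply ds ddu]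
  ring

theorem mul_fderiv_fderiv_fun_mul_sub (hΩ : IsOpen Ω) (hs : ContDiffOn 𝕜 2 s Ω)
    (hu : ContDiffOn 𝕜 2 u Ω) (hz : z ∈ Ω) (v : E) :
    s z * fderiv 𝕜 (fun w => fderiv 𝕜 (fun w' => s w' * u w') w v) z v
        - fderiv 𝕜 (fun w => fderiv 𝕜 s w v) z v * (s z * u z)
      = fderiv 𝕜 (fun w => s w * s w * fderiv 𝕜 u w v) z v := by
  have ds := (hs.contDiffAt (hΩ.mem_nhds hz)).differentiableAt two_ne_zero
  have ddu := hu.differentiableAt_fderiv_apply hΩ hz v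
  rw [fderiv_fderiv_fun_mul_apply hΩ hs hu hz, fderiv_fun_mul_apply (ds.fun_mul ds) ddu,
    fderiv_fun_mul_apply ds ds]
  ring

end DirectionalLeibniz

theorem mul_lap_mul_sub {Ω : Set ℂ} (hΩ : IsOpen Ω) {s u : ℂ → ℂ} (hs : ContDiffOn ℝ 2 s Ω)
    (hu : ContDiffOn ℝ 2 u Ω) {z : ℂ} (hz : z ∈ Ω) :
    s z * lap (fun w => s w * u w) z - lap s z * (s z * u z)
      = dx (fun w => s w * s w * dx u w) z + dy (fun w => s w * s w * dy u w) z := by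
  have hx := mul_fderiv_fderiv_fun_mul_sub hΩ hs hu hz 1
  have hy := mul_fderiv_fderiv_fun_mul_sub hΩ hs hu hz Complex.I
  unfold lap dx dy
  linear_combination hx + hy

/-- The substitution `ψ = √σ · u` transforms the conductivity equation into th
Schrödinger equation `Δψ = q ψ` with `q = Δ(√σ)/√σ`. -/
theorem conductivity_to_schrodinger
    (Ω : Set ℂ) (hΩ : IsOpen Ω) (σ : ℂ → ℝ) (u : ℂ → ℂ)
    (hσ : ContDiffOn ℝ 2 σ Ω) (hσpos : ∀ z ∈ Ω, 0 < σ z)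
    (hu : ContDiffOn ℝ 2 u Ω)
    (hcond : ∀ z ∈ Ω,
      dx (fun w => (σ w : ℂ) * dx u w) z + dy (fun w => (σ w : ℂ) * dy u w) z = 0) :
    ∀ z ∈ Ω,
      lap (fun w => (Real.sqrt (σ w) : ℂ) * u w) z
        = (lap (fun w => (Real.sqrt (σ w) : ℂ)) z / (Real.sqrt (σ z) : ℂ))
            * ((Real.sqrt (σ z) : ℂ) * u z) := by
  intro z hz
  set s : ℂ → ℂ := fun w => (Real.sqrt (σ w) : ℂ)
  have hs : ContDiffOn ℝ 2 s Ω :=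
    ofRealCLM.contDiff.comp_contDiffOn (hσ.sqrt fun w hw => (hσpos w hw).ne')
  have hsz : s z ≠ 0 := ofReal_ne_zero.mpr (Real.sqrt_pos.mpr (hσpos z hz)).ne'
  have hσ_sq : ∀ᶠ w in nhds z, (σ w : ℂ) = s w * s w := by
    filter_upwards [hΩ.mem_nhds hz] with w hw
    rw [← ofReal_mul, Real.mul_self_sqrt (hσpos w hw).le]
  have hdiv : dx (fun w => s w * s w * dx u w) z + dy (fun w => s w * s w * dy u w) z = 0 := by
    have hx : (fun w => (σ w : ℂ) * dx u w) =ᶠ[nhds z] fun w => s w * s w * dx u w :=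
      hσ_sq.mono fun w hw => congrArg (· * dx u w) hw
    have hy : (fun w => (σ w : ℂ) * dy u w) =ᶠ[nhds z] fun w => s w * s w * dy u w :=
      hσ_sq.mono fun w hw => congrArg (· * dy u w) hw
    have h := hcond z hz
    rwa [dx, dy, hx.fderiv_eq, hy.fderiv_eq] at h
  have hlap := mul_lap_mul_sub hΩ hs hu hz
  rw [div_mul_eq_mul_div, eq_div_iff hsz]
  linear_combination hlap + hdiv
end

section
/- Let Ω ⊆ ℂ be an open set, let γ : ℂ → ℂ be continuously differentiable and nonvanishing on Ω, and let g : ℂ → ℂ be continuously differentiable on Ω with g(z)² = γ(z) for all z ∈ Ω. Let u : ℂ → ℂ be twice continuously differentiable on Ω satisfying the conductivity equation ∂ₓ(γ ∂ₓ u) + ∂_y(γ ∂_y u) = 0 on Ω. Define Ψ₁₁(z) = g(z) ∂_z u(z) and Ψ₂₁(z) = g(z) ∂̄_z u(z). Then for all z ∈ Ω: ∂̄_z Ψ₁₁(z) = −( ∂_z γ(z) / (2 γ(z)) ) · Ψ₂₁(z) and ∂_z Ψ₂₁(z) = −( ∂̄_z γ(z) / (2 γ(z)) ) · Ψ₁₁(z);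 that is, the pair (Ψ₁₁, Ψ₂₁) satisfies the Brown–Uhlmann first-order system D Ψ = Q Ψ with Q₁₂ = −½ ∂_z log γ and Q₂₁ = −½ ∂̄_z log γ. -/
/-!
In Wirtinger notation the conductivity operator reads
`∂ₓ(γ ∂ₓu) + ∂_y(γ ∂_yu) = 2 (∂γ ∂̄u + ∂̄γ ∂u) + γ Δu`, and `∂̄∂u = ∂∂̄u = Δu / 4` by the
symmetry of the Hessian of `u`. Since `γ = g²` near `z`, `∂γ = 2g ∂g` and `∂̄γ = 2g ∂̄g`, so the
conductivity equation says `g Δu / 4 = -(∂g ∂̄u + ∂̄g ∂u)`. By the Leibniz rule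
`∂̄(g ∂u) = ∂̄g ∂u + g Δu / 4 = -∂g ∂̄u = -(∂γ / 2γ) g ∂̄u`, and symmetrically for `∂(g ∂̄u)`.
-/

open Complex MeasureTheory

open Filter Topology

lemma ContDiffAt.differentiableAt_fderiv {𝕜 E F : Type*} [NontriviallyNormedField 𝕜]
    [NormedAddCommGroup E] [NormedSpace 𝕜 E] [NormedAddCommGroup F] [NormedSpace 𝕜 F]
    {f : E → F} {x : E} (hf : ContDiffAt 𝕜 2 f x) : DifferentiableAt 𝕜 (fderiv 𝕜 f) x :=
  (hf.fderiv_right (m := 1) le_rfl).differentiableAt one_ne_zero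

section Wirtinger

variable {f h u : ℂ → ℂ} {z : ℂ}

lemma fderiv_mul_apply (hf : DifferentiableAt ℝ f z) (hh : DifferentiableAt ℝ h z) (v : ℂ) :
    fderiv ℝ (fun w => f w * h w) z v = fderiv ℝ f z v * h z + f z * fderiv ℝ h z v := by
  rw [fderiv_fun_mul hf hh]
  simp only [add_apply, smul_apply, smul_eq_mul]
  ring

lemma dx_mul (hf : DifferentiableAt ℝ f z) (hh : DifferentiableAt ℝ h z) :
    dx (fun w => f w * h w) z = dx f z * h z + f z * dx h z :=
  fderiv_mul_apply hf hh 1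

lemma dy_mul (hf : DifferentiableAt ℝ f z) (hh : DifferentiableAt ℝ h z) :
    dy (fun w => f w * h w) z = dy f z * h z + f z * dy h z :=
  fderiv_mul_apply hf hh I

lemma dz_mul (hf : DifferentiableAt ℝ f z) (hh : DifferentiableAt ℝ h z) :
    dz (fun w => f w * h w) z = dz f z * h z + f z * dz h z := by
  simp only [dz, dx_mul hf hh, dy_mul hf hh]
  ring

lemma dbar_mul (hf : DifferentiableAt ℝ f z) (hh : DifferentiableAt ℝ h z) :
    dbar (fun w => f w * h w) z = dbar f z * h z + f z * dbar h z := by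
  simp only [dbar, dx_mul hf hh, dy_mul hf hh]
  ring

lemma dz_sq (hf : DifferentiableAt ℝ f z) : dz (fun w => f w ^ 2) z = 2 * f z * dz f z := by
  simp only [sq, dz_mul hf hf]
  ring

lemma dbar_sq (hf : DifferentiableAt ℝ f z) : dbar (fun w => f w ^ 2) z = 2 * f z * dbar f z := by
  simp only [sq, dbar_mul hf hf]
  ring

lemma Filter.EventuallyEq.dz_eq (hfh : f =ᶠ[𝓝 z] h) : dz f z = dz h z := by
  simp only [dz, dx, dy, hfh.fderiv_eq]

lemma Filter.EventuallyEq.dbar_eq (hfh : f =ᶠ[𝓝 z] h) : dbar f z = dbar h z := by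
  simp only [dbar, dx, dy, hfh.fderiv_eq]

lemma dx_mul_dx_add_dy_mul_dy_eq_wirtinger (f h : ℂ → ℂ) (z : ℂ) :
    dx f z * dx h z + dy f z * dy h z = 2 * (dz f z * dbar h z + dbar f z * dz h z) := by
  simp only [dz, dbar]
  linear_combination (dy f z * dy h z) * I_mul_I

lemma fderiv_fderiv_apply (hu : DifferentiableAt ℝ (fderiv ℝ u) z) (v w : ℂ) :
    fderiv ℝ (fun x => fderiv ℝ u x v) z w = fderiv ℝ (fderiv ℝ u) z w v := by
  simp [fderiv_clm_apply hu (differentiableAt_const v)]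

lemma fderiv_dx_apply (hu : DifferentiableAt ℝ (fderiv ℝ u) z) (v : ℂ) :
    fderiv ℝ (dx u) z v = fderiv ℝ (fderiv ℝ u) z v 1 :=
  fderiv_fderiv_apply hu 1 v

lemma fderiv_dy_apply (hu : DifferentiableAt ℝ (fderiv ℝ u) z) (v : ℂ) :
    fderiv ℝ (dy u) z v = fderiv ℝ (fderiv ℝ u) z v I :=
  fderiv_fderiv_apply hu I v

lemma differentiableAt_dx (hu : DifferentiableAt ℝ (fderiv ℝ u) z) : DifferentiableAt ℝ (dx u) z :=
  hu.clm_apply (differentiableAt_const 1)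

lemma differentiableAt_dy (hu : DifferentiableAt ℝ (fderiv ℝ u) z) : DifferentiableAt ℝ (dy u) z :=
  hu.clm_apply (differentiableAt_const I)

lemma differentiableAt_dz (hu : DifferentiableAt ℝ (fderiv ℝ u) z) :
    DifferentiableAt ℝ (dz u) z := by
  have := differentiableAt_dx hu
  have := differentiableAt_dy hu
  unfold dz
  fun_prop

lemma differentiableAt_dbar (hu : DifferentiableAt ℝ (fderiv ℝ u) z) :
    DifferentiableAt ℝ (dbar u) z := by
  have := differentiableAt_dx hu
  have := differentiableAt_dy hu
  unfold dbar
  fun_prop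

lemma fderiv_dz_apply (hu : DifferentiableAt ℝ (fderiv ℝ u) z) (v : ℂ) :
    fderiv ℝ (dz u) z v = (fderiv ℝ (dx u) z v - I * fderiv ℝ (dy u) z v) / 2 := by
  have h : HasFDerivAt (fun w => (dx u w - I * dy u w) * (2 : ℂ)⁻¹)
      ((2 : ℂ)⁻¹ • (fderiv ℝ (dx u) z - I • fderiv ℝ (dy u) z)) z :=
    ((differentiableAt_dx hu).hasFDerivAt.sub
      ((differentiableAt_dy hu).hasFDerivAt.const_mul I)).mul_const (2 : ℂ)⁻¹
  rw [show dz u = fun w => (dx u w - I * dy u w) * (2 : ℂ)⁻¹ by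
    funext w; exact div_eq_mul_inv _ _, h.fderiv]
  simp only [smul_apply, sub_apply, smul_eq_mul]
  ring

lemma fderiv_dbar_apply (hu : DifferentiableAt ℝ (fderiv ℝ u) z) (v : ℂ) :
    fderiv ℝ (dbar u) z v = (fderiv ℝ (dx u) z v + I * fderiv ℝ (dy u) z v) / 2 := by
  have h : HasFDerivAt (fun w => (dx u w + I * dy u w) * (2 : ℂ)⁻¹)
      ((2 : ℂ)⁻¹ • (fderiv ℝ (dx u) z + I • fderiv ℝ (dy u) z)) z :=
    ((differentiableAt_dx hu).hasFDerivAt.add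
      ((differentiableAt_dy hu).hasFDerivAt.const_mul I)).mul_const (2 : ℂ)⁻¹
  rw [show dbar u = fun w => (dx u w + I * dy u w) * (2 : ℂ)⁻¹ by
    funext w; exact div_eq_mul_inv _ _, h.fderiv]
  simp only [smul_apply, add_apply, smul_eq_mul]
  ring

lemma dy_dx_eq_dx_dy (hu : ContDiffAt ℝ 2 u z) : dy (dx u) z = dx (dy u) z := by
  have hD := hu.differentiableAt_fderiv
  show fderiv ℝ (dx u) z I = fderiv ℝ (dy u) z 1
  rw [fderiv_dx_apply hD, fderiv_dy_apply hD]
  exact (hu.isSymmSndFDerivAt (by simp [minSmoothness_of_isRCLikeNormedField])) _ _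

lemma dbar_dz_eq_lap (hu : ContDiffAt ℝ 2 u z) : dbar (dz u) z = lap u z / 4 := by
  have hD := hu.differentiableAt_fderiv
  have hx : dx (dz u) z = (dx (dx u) z - I * dx (dy u) z) / 2 := fderiv_dz_apply hD 1
  have hy : dy (dz u) z = (dy (dx u) z - I * dy (dy u) z) / 2 := fderiv_dz_apply hD I
  rw [dbar, lap, hx, hy, dy_dx_eq_dx_dy hu]
  linear_combination (-dy (dy u) z / 4) * I_mul_I

lemma dz_dbar_eq_lap (hu : ContDiffAt ℝ 2 u z) : dz (dbar u) z = lap u z / 4 := by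
  have hD := hu.differentiableAt_fderiv
  have hx : dx (dbar u) z = (dx (dx u) z + I * dx (dy u) z) / 2 := fderiv_dbar_apply hD 1
  have hy : dy (dbar u) z = (dy (dx u) z + I * dy (dy u) z) / 2 := fderiv_dbar_apply hD I
  rw [dz, lap, hx, hy, dy_dx_eq_dx_dy hu]
  linear_combination (-dy (dy u) z / 4) * I_mul_I

lemma conductivity_operator_eq {γ : ℂ → ℂ} (hγ : DifferentiableAt ℝ γ z)
    (hu : ContDiffAt ℝ 2 u z) :
    dx (fun w => γ w * dx u w) z + dy (fun w => γ w * dy u w) z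
      = 2 * (dz γ z * dbar u z + dbar γ z * dz u z) + γ z * lap u z := by
  have hD := hu.differentiableAt_fderiv
  rw [dx_mul hγ (differentiableAt_dx hD), dy_mul hγ (differentiableAt_dy hD),
    ← dx_mul_dx_add_dy_mul_dy_eq_wirtinger, lap]
  ring

end Wirtinger

theorem brown_uhlmann_system_at {γ g u : ℂ → ℂ} {z : ℂ} (hγg : γ =ᶠ[𝓝 z] fun w => g w ^ 2)
    (hγ0 : γ z ≠ 0) (hg : DifferentiableAt ℝ g z) (hu : ContDiffAt ℝ 2 u z)
    (hcond : dx (fun w => γ w * dx u w) z + dy (fun w => γ w * dy u w) z = 0) :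
    dbar (fun w => g w * dz u w) z = -(dz γ z / (2 * γ z)) * (g z * dbar u z)
      ∧ dz (fun w => g w * dbar u w) z = -(dbar γ z / (2 * γ z)) * (g z * dz u z) := by
  have hD := hu.differentiableAt_fderiv
  have hγ : DifferentiableAt ℝ γ z := (hg.pow 2).congr_of_eventuallyEq hγg
  have hγz : γ z = g z ^ 2 := hγg.eq_of_nhds
  have hg0 : g z ≠ 0 := by intro h; simp [hγz, h] at hγ0
  rw [conductivity_operator_eq hγ hu, hγg.dz_eq, hγg.dbar_eq, dz_sq hg, dbar_sq hg, hγz] at hcond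
  rw [hγg.dz_eq, hγg.dbar_eq, dz_sq hg, dbar_sq hg, hγz, dbar_mul hg (differentiableAt_dz hD),
    dz_mul hg (differentiableAt_dbar hD), dbar_dz_eq_lap hu, dz_dbar_eq_lap hu]
  have hlap : g z * lap u z = -4 * (dz g z * dbar u z + dbar g z * dz u z) :=
    mul_left_cancel₀ hg0 (by linear_combination hcond)
  constructor
  · field_simp
    linear_combination hlap
  · field_simp
    linear_combination hlap

theorem brown_uhlmann_system_general
    (Ω : Set ℂ) (hΩ : IsOpen Ω) (γ g u : ℂ → ℂ)
    (hγ0 : ∀ z ∈ Ω, γ z ≠ 0)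
    (hg : ContDiffOn ℝ 1 g Ω) (hg2 : ∀ z ∈ Ω, g z ^ 2 = γ z)
    (hu : ContDiffOn ℝ 2 u Ω)
    (hcond : ∀ z ∈ Ω,
      dx (fun w => γ w * dx u w) z + dy (fun w => γ w * dy u w) z = 0) :
    ∀ z ∈ Ω,
      dbar (fun w => g w * dz u w) z = -(dz γ z / (2 * γ z)) * (g z * dbar u z)
      ∧ dz (fun w => g w * dbar u w) z = -(dbar γ z / (2 * γ z)) * (g z * dz u z) := by
  intro z hz
  have hΩz : Ω ∈ 𝓝 z := hΩ.mem_nhds hz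
  have hγg : γ =ᶠ[𝓝 z] fun w => g w ^ 2 :=
    mem_of_superset hΩz fun w hw => (hg2 w hw).symm
  exact brown_uhlmann_system_at hγg (hγ0 z hz)
    ((hg.contDiffAt hΩz).differentiableAt one_ne_zero) (hu.contDiffAt hΩz) (hcond z hz)

/-- The Brown–Uhlmann first-order system: with `Ψ₁₁ = γ^{1/2} ∂_z u` and
`Ψ₂₁ = γ^{1/2} ∂̄_z u`, a solution of the conductivity equation satisfies
`DΨ = QΨ` with `Q₁₂ = −½ ∂_z log γ`, `Q₂₁ = −½ ∂̄_z log γ`. -/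
theorem brown_uhlmann_system
    (Ω : Set ℂ) (hΩ : IsOpen Ω) (γ g u : ℂ → ℂ)
    (hγ : ContDiffOn ℝ 1 γ Ω) (hγ0 : ∀ z ∈ Ω, γ z ≠ 0)
    (hg : ContDiffOn ℝ 1 g Ω) (hg2 : ∀ z ∈ Ω, g z ^ 2 = γ z)
    (hu : ContDiffOn ℝ 2 u Ω)
    (hcond : ∀ z ∈ Ω,
      dx (fun w => γ w * dx u w) z + dy (fun w => γ w * dy u w) z = 0) :
    ∀ z ∈ Ω,
      dbar (fun w => g w * dz u w) z = -(dz γ z / (2 * γ z)) * (g z * dbar u z)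
      ∧ dz (fun w => g w * dbar u w) z = -(dbar γ z / (2 * γ z)) * (g z * dz u z) :=
  brown_uhlmann_system_general Ω hΩ γ g u hγ0 hg hg2 hu hcond
end

section
/- Let f : ℂ → ℂ be continuously differentiable with compact support. Then for every z ∈ ℂ, f(z) = (1/π) ∫_ℂ ∂̄_z f(ζ) / (z − ζ) dA(ζ), where dA denotes the Lebesgue area measure on ℂ and the integrand is interpreted as 0 at ζ = z (the singularity 1/(z − ζ) is locally integrable, so the integral converges absolutely). -/
/-!
In polar coordinates `ζ = z + r e^{iθ}` centred at `z`, the area element `r dr dθ` cancels the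
singularity of the kernel: with `D = Df(ζ)`,
`r ∂̄f(ζ) / (z - ζ) = -(D e^{iθ} + i D(i e^{iθ})) / 2 = -(∂_r f + i r⁻¹ ∂_θ f) / 2`.
Both terms are continuous and vanish for large `r`, which gives absolute convergence. Along every
ray the integral of `∂_r f` is `-f(z)` because `f` has compact support, and over every circle the
integral of `∂_θ f` vanishes by periodicity, so the integral equals `-(2π · (-f z)) / 2 = π f(z)`.
-/

open Complex MeasureTheory

open Set Filter Real ComplexConjugate

section

variable {E : Type*} [NormedAddCommGroup E] [NormedSpace ℝ E]

theorem integrable_iff_integrableOn_polarCoord_symm (g : ℝ × ℝ → E) :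
    Integrable g ↔ IntegrableOn (fun p => p.1 • g (polarCoord.symm p)) polarCoord.target := by
  rw [← integrableOn_univ, ← integrableOn_congr_set_ae polarCoord_source_ae_eq_univ,
    ← polarCoord.symm_image_target_eq_source,
    integrableOn_image_iff_integrableOn_abs_det_fderiv_smul volume
      polarCoord.open_target.measurableSet
      (fun p _ => (hasFDerivAt_polarCoord_symm p).hasFDerivWithinAt) polarCoord.symm.injOn g]
  refine integrableOn_congr_fun (fun p hp => ?_) polarCoord.open_target.measurableSet
  rw [det_fderivPolarCoordSymm, abs_of_pos hp.1]

theorem circleMap_eq_add_polarCoord_symm (c : ℂ) (p : ℝ × ℝ) :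
    circleMap c p.1 p.2 = c + Complex.polarCoord.symm p := by
  simp [circleMap, Complex.exp_mul_I, ← Complex.ofReal_cos, ← Complex.ofReal_sin]

theorem integral_eq_integral_circleMap_polarCoord (F : ℂ → E) (c : ℂ) :
    ∫ ζ, F ζ = ∫ p in polarCoord.target, p.1 • F (circleMap c p.1 p.2) := by
  simp_rw [circleMap_eq_add_polarCoord_symm]
  rw [Complex.integral_comp_polarCoord_symm (fun ζ => F (c + ζ)), integral_add_left_eq_self]

theorem integrable_iff_integrableOn_circleMap_polarCoord (F : ℂ → E) (c : ℂ) :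
    Integrable F ↔
      IntegrableOn (fun p => p.1 • F (circleMap c p.1 p.2)) polarCoord.target := by
  simp_rw [circleMap_eq_add_polarCoord_symm]
  rw [← (measurePreserving_add_left volume c).integrable_comp_emb
      (measurableEmbedding_addLeft c),
    ← (Complex.volume_preserving_equiv_real_prod.symm).integrable_comp_emb
      Complex.measurableEquivRealProd.symm.measurableEmbedding,
    integrable_iff_integrableOn_polarCoord_symm]
  rfl

theorem HasCompactSupport.integrableOn_polarCoord_target_fderiv_circleMap {f : ℂ → E}
    (hf : ContDiff ℝ 1 f) (hsupp : HasCompactSupport f) (z : ℂ) {v : ℝ → ℂ}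
    (hv : Continuous v) :
    IntegrableOn (fun p : ℝ × ℝ => fderiv ℝ f (circleMap z p.1 p.2) (v p.2))
      polarCoord.target := by
  obtain ⟨R, hR⟩ := hsupp.isBounded.subset_closedBall z
  have hcont : Continuous fun p : ℝ × ℝ => fderiv ℝ f (circleMap z p.1 p.2) (v p.2) :=
    ((hf.continuous_fderiv one_ne_zero).comp circleMap.continuous).clm_apply
      (hv.comp continuous_snd)
  have hvanish (p : ℝ × ℝ) (hp : R < p.1) : fderiv ℝ f (circleMap z p.1 p.2) = 0 := by
    refine fderiv_of_notMem_tsupport _ fun hmem => ?_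
    have := hR hmem
    rw [Metric.mem_closedBall, dist_eq_norm, circleMap_sub_center, norm_circleMap_zero] at this
    exact absurd (hp.trans_le (le_abs_self _)) this.not_gt
  have hK : IsCompact (Icc 0 R ×ˢ Icc (-π) π) := isCompact_Icc.prod isCompact_Icc
  refine (hcont.continuousOn.integrableOn_compact hK).of_forall_sdiff_eq_zero
    polarCoord.open_target.measurableSet fun p ⟨⟨hp₁, hp₂⟩, hpK⟩ => ?_
  have hRp : R < p.1 := by
    by_contra! h
    exact hpK ⟨⟨hp₁.le, h⟩, Ioo_subset_Icc_self hp₂⟩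
  simp [hvanish p hRp]

theorem volume_restrict_polarCoord_target :
    (volume : Measure (ℝ × ℝ)).restrict polarCoord.target =
      (volume.restrict (Ioi 0)).prod (volume.restrict (Ioo (-π) π)) := by
  rw [Measure.prod_restrict, ← Measure.volume_eq_prod]
  rfl

variable [CompleteSpace E]

theorem HasCompactSupport.integral_Ioi_fderiv_ray {V : Type*} [NormedAddCommGroup V]
    [NormedSpace ℝ V] {f : V → E} (hf : ContDiff ℝ 1 f)
    (hsupp : HasCompactSupport f) (x : V) {v : V} (hv : v ≠ 0) :
    ∫ t in Ioi (0 : ℝ), fderiv ℝ f (x + t • v) v = -f x := by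
  have hray : Topology.IsClosedEmbedding fun t : ℝ => x + t • v :=
    (Homeomorph.addLeft x).isClosedEmbedding.comp (isClosedEmbedding_smul_left hv)
  have hderiv (t : ℝ) :
      HasDerivAt (fun t : ℝ => f (x + t • v)) (fderiv ℝ f (x + t • v) v) t := by
    refine (hf.differentiable one_ne_zero _).hasFDerivAt.comp_hasDerivAt t ?_
    simpa using ((hasDerivAt_id t).smul_const v).const_add x
  have hint : Integrable fun t : ℝ => fderiv ℝ f (x + t • v) v :=
    ((hf.continuous_fderiv one_ne_zero).comp hray.continuous).clm_apply continuous_const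
      |>.integrable_of_hasCompactSupport ((hsupp.fderiv_apply ℝ v).comp_isClosedEmbedding hray)
  have hlim : Tendsto (fun t : ℝ => f (x + t • v)) atTop (nhds 0) :=
    ((hsupp.comp_isClosedEmbedding hray).is_zero_at_infty).mono_left atTop_le_cocompact
  rw [integral_Ioi_of_hasDerivAt_of_tendsto' (fun t _ => hderiv t) hint.integrableOn hlim]
  simp

theorem integral_fderiv_circleMap_eq_zero {f : ℂ → E} (hf : ContDiff ℝ 1 f)
    (c : ℂ) (R a : ℝ) :
    ∫ θ in a..a + 2 * π, fderiv ℝ f (circleMap c R θ) (circleMap 0 R θ * I) = 0 := by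
  have hderiv (θ : ℝ) : HasDerivAt (f ∘ circleMap c R)
      (fderiv ℝ f (circleMap c R θ) (circleMap 0 R θ * I)) θ :=
    (hf.differentiable one_ne_zero _).hasFDerivAt.comp_hasDerivAt θ (hasDerivAt_circleMap c R θ)
  have hcont : Continuous fun θ => fderiv ℝ f (circleMap c R θ) (circleMap 0 R θ * I) :=
    ((hf.continuous_fderiv one_ne_zero).comp (continuous_circleMap c R)).clm_apply
      ((continuous_circleMap 0 R).mul continuous_const)
  rw [intervalIntegral.integral_eq_sub_of_hasDerivAt (fun θ _ => hderiv θ)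
    (hcont.intervalIntegrable _ _)]
  simp [periodic_circleMap c R a]

variable {f : ℂ → E}

theorem HasCompactSupport.integral_polarCoord_target_fderiv_radial (hf : ContDiff ℝ 1 f)
    (hsupp : HasCompactSupport f) (z : ℂ) :
    ∫ p in polarCoord.target, fderiv ℝ f (circleMap z p.1 p.2) (exp (p.2 * I)) =
      -(2 * π) • f z := by
  have hint := hsupp.integrableOn_polarCoord_target_fderiv_circleMap hf z
    (v := fun θ => exp (θ * I)) (by fun_prop)
  have hray (θ : ℝ) :
      ∫ r in Ioi 0, fderiv ℝ f (circleMap z r θ) (exp (θ * I)) = -f z := by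
    simpa [circleMap, Complex.real_smul] using
      hsupp.integral_Ioi_fderiv_ray hf z (exp_ne_zero (θ * I))
  rw [IntegrableOn, volume_restrict_polarCoord_target] at hint
  rw [volume_restrict_polarCoord_target, integral_prod_symm _ hint]
  simp only [hray, setIntegral_const, volume_real_Ioo_of_le (neg_le_self pi_pos.le)]
  module

theorem HasCompactSupport.integral_polarCoord_target_fderiv_angular (hf : ContDiff ℝ 1 f)
    (hsupp : HasCompactSupport f) (z : ℂ) :
    ∫ p in polarCoord.target, fderiv ℝ f (circleMap z p.1 p.2) (I * exp (p.2 * I)) = 0 := by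
  have hint := hsupp.integrableOn_polarCoord_target_fderiv_circleMap hf z
    (v := fun θ => I * exp (θ * I)) (by fun_prop)
  have hcircle {r : ℝ} (hr : 0 < r) :
      ∫ θ in Ioo (-π) π, fderiv ℝ f (circleMap z r θ) (I * exp (θ * I)) = 0 := by
    have h := integral_fderiv_circleMap_eq_zero hf z r (-π)
    have hscale (θ : ℝ) : (r : ℂ) * exp (θ * I) * I = r • (I * exp (θ * I)) := by
      rw [Complex.real_smul]; ring
    simp only [circleMap_zero, hscale, map_smul, intervalIntegral.integral_smul,
      show -π + 2 * π = π by ring, smul_eq_zero, hr.ne', false_or] at h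
    rwa [intervalIntegral.integral_of_le (neg_le_self pi_pos.le),
      integral_Ioc_eq_integral_Ioo] at h
  rw [IntegrableOn, volume_restrict_polarCoord_target] at hint
  rw [volume_restrict_polarCoord_target, integral_prod _ hint,
    setIntegral_congr_fun measurableSet_Ioi fun r hr => hcircle hr, integral_zero]

end

theorem ContinuousLinearMap.apply_add_I_smul_apply_I_mul {F : Type*} [NormedAddCommGroup F]
    [NormedSpace ℂ F] (D : ℂ →L[ℝ] F) (u : ℂ) :
    D u + I • D (I * u) = conj u • (D 1 + I • D I) := by
  have h₁ : D u = (u.re : ℂ) • D 1 + (u.im : ℂ) • D I := by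
    rw [Complex.coe_smul, Complex.coe_smul, ← map_smul, ← map_smul, ← map_add]
    simp [Complex.real_smul, re_add_im]
  have h₂ : D (I * u) = (-u.im : ℂ) • D 1 + (u.re : ℂ) • D I := by
    rw [← ofReal_neg, Complex.coe_smul, Complex.coe_smul, ← map_smul, ← map_smul, ← map_add]
    congr 1
    apply Complex.ext <;> simp
  have h₃ : conj u = u.re - u.im * I := by apply Complex.ext <;> simp
  rw [h₁, h₂, h₃]
  match_scalars
  · ring
  · linear_combination (u.im : ℂ) * I_sq

theorem smul_dbar_div_sub_circleMap (f : ℂ → ℂ) (z : ℂ) {r : ℝ} (hr : r ≠ 0) (θ : ℝ) :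
    r • (dbar f (circleMap z r θ) / (z - circleMap z r θ)) =
      -(fderiv ℝ f (circleMap z r θ) (exp (θ * I))
        + I * fderiv ℝ f (circleMap z r θ) (I * exp (θ * I))) / 2 := by
  set D := fderiv ℝ f (circleMap z r θ)
  have hD := D.apply_add_I_smul_apply_I_mul (exp (θ * I))
  have hunit : exp (θ * I) * conj (exp (θ * I)) = 1 := by
    rw [← exp_conj, ← Complex.exp_add]; simp
  have hsub : z - circleMap z r θ = -(r * exp (θ * I)) := by
    rw [← circleMap_zero, ← circleMap_sub_center, neg_sub]
  have hr' : (r : ℂ) ≠ 0 := ofReal_ne_zero.2 hr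
  have he : exp (θ * I) ≠ 0 := exp_ne_zero _
  simp only [smul_eq_mul] at hD
  rw [hD, hsub, dbar, dx, dy, Complex.real_smul]
  generalize exp (θ * I) = e at *
  field_simp
  linear_combination (D 1 + I * D I) * hunit

/-- Cauchy–Pompeiu / solid Cauchy transform inversion of `∂̄`: for a `C¹`
compactly supported `f`, `f(z) = (1/π) ∫ ∂̄f(ζ)/(z − ζ) dA(ζ)`, the integral
converging absolutely. -/
theorem cauchy_pompeiu_compact_support
    (f : ℂ → ℂ) (hf : ContDiff ℝ 1 f) (hsupp : HasCompactSupport f) :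
    ∀ z : ℂ,
      Integrable (fun ζ : ℂ => dbar f ζ / (z - ζ))
      ∧ f z = (1 / Real.pi : ℝ) * ∫ ζ : ℂ, dbar f ζ / (z - ζ) := by
  intro z
  set radial : ℝ × ℝ → ℂ := fun p => fderiv ℝ f (circleMap z p.1 p.2) (exp (p.2 * I))
  set angular : ℝ × ℝ → ℂ := fun p => fderiv ℝ f (circleMap z p.1 p.2) (I * exp (p.2 * I))
  have hpolar : EqOn
      (fun p : ℝ × ℝ => p.1 • (dbar f (circleMap z p.1 p.2) / (z - circleMap z p.1 p.2)))
      (fun p => -(radial p + I * angular p) / 2) polarCoord.target :=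
    fun p hp => smul_dbar_div_sub_circleMap f z hp.1.ne' p.2
  have hradial : IntegrableOn radial polarCoord.target :=
    hsupp.integrableOn_polarCoord_target_fderiv_circleMap hf z (v := fun θ => exp (θ * I))
      (by fun_prop)
  have hangular : IntegrableOn angular polarCoord.target :=
    hsupp.integrableOn_polarCoord_target_fderiv_circleMap hf z (v := fun θ => I * exp (θ * I))
      (by fun_prop)
  have hint : IntegrableOn (fun p => -(radial p + I * angular p) / 2) polarCoord.target :=
    ((hradial.add (hangular.const_mul I)).neg).div_const 2
  refine ⟨(integrable_iff_integrableOn_circleMap_polarCoord _ z).2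
    (hint.congr_fun hpolar.symm polarCoord.open_target.measurableSet), ?_⟩
  rw [integral_eq_integral_circleMap_polarCoord _ z,
    setIntegral_congr_fun polarCoord.open_target.measurableSet hpolar, integral_div, integral_neg,
    integral_add hradial (hangular.const_mul I), integral_const_mul,
    hsupp.integral_polarCoord_target_fderiv_radial hf z,
    hsupp.integral_polarCoord_target_fderiv_angular hf z, Complex.real_smul]
  have hπ : (π : ℂ) ≠ 0 := ofReal_ne_zero.2 pi_ne_zero
  push_cast
  field_simp
  ring
end
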